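/- In one-sided classical linear logic LL (MALL extended with exponentials ? and !), ?-weakening and ?-contraction being primitive rules, the weakening-of-bang rule is height-preserving admissible: if ⊢ Γ, !F is derivable with height at most n, then ⊢ Γ, F is derivable with height at most n. -/

import Mathlib

/-- Formulas of one-sided classical propositional linear logic LL. -/
inductive LForm where
  | pos : ℕ → LForm          -- atom p
  | neg : ℕ → LForm          -- dual atom p⊥
  | one : LForm
  | bot : LForm
  | top : LForm
  | zero : LForm
  | tensor : LForm → LForm → LForm
  | parr : LForm → LForm → LForm
  | with_ : LForm → LForm → LForm
  | oplus : LForm → LForm → LForm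
  | quest : LForm → LForm    -- ?A
  | bang : LForm → LForm     -- !A

open LForm

/-- `Der n Γ` : the one-sided sequent `⊢ Γ` is derivable in LL with
height at most `n`. -/
inductive Der : ℕ → Multiset LForm → Prop where
  | ax (n : ℕ) (p : ℕ) : Der (n + 1) {neg p, pos p}
  | one_ (n : ℕ) : Der (n + 1) {one}
  | bot_ {n Γ} : Der n Γ → Der (n + 1) (bot ::ₘ Γ)
  | top_ (n : ℕ) (Γ : Multiset LForm) : Der (n + 1) (top ::ₘ Γ)
  | tensor_ {n Γ₁ Γ₂ A B} : Der n (A ::ₘ Γ₁) → Der n (B ::ₘ Γ₂) →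
      Der (n + 1) (tensor A B ::ₘ (Γ₁ + Γ₂))
  | parr_ {n Γ A B} : Der n (A ::ₘ B ::ₘ Γ) → Der (n + 1) (parr A B ::ₘ Γ)
  | with_' {n Γ A B} : Der n (A ::ₘ Γ) → Der n (B ::ₘ Γ) →
      Der (n + 1) (with_ A B ::ₘ Γ)
  | oplus1 {n Γ A B} : Der n (A ::ₘ Γ) → Der (n + 1) (oplus A B ::ₘ Γ)
  | oplus2 {n Γ A B} : Der n (B ::ₘ Γ) → Der (n + 1) (oplus A B ::ₘ Γ)
  /-- Promotion: the context consists only of ?-formulas. -/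
  | promotion {n} (Γ : Multiset LForm) {A} :
      Der n (A ::ₘ Γ.map quest) → Der (n + 1) (bang A ::ₘ Γ.map quest)
  | dereliction {n Γ A} : Der n (A ::ₘ Γ) → Der (n + 1) (quest A ::ₘ Γ)
  | questW {n Γ} (A : LForm) : Der n Γ → Der (n + 1) (quest A ::ₘ Γ)
  | questC {n Γ A} : Der n (quest A ::ₘ quest A ::ₘ Γ) →
      Der (n + 1) (quest A ::ₘ Γ)

/-! Induction on the derivation of a sequent containing `!F`. If `!F` is principal, the last rule
is a promotion and its premise `⊢ F, ?Γ` is the sequent sought, one step lower. Otherwise `!F`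
sits in the context of the last rule, which is never a promotion (whose context consists of
`?`-formulas); every other rule passes its context (for `⊗`, one part of it) on to its premises
unchanged, so `!F` is replaced by `F` there and the rule is applied again at the same height. -/

theorem Multiset.cons_erase_cons_of_mem {α : Type*} [DecidableEq α] {a b c : α}
    {s : Multiset α} (h : a ∈ s) : c ::ₘ (b ::ₘ s).erase a = b ::ₘ c ::ₘ s.erase a := by
  rw [Multiset.erase_cons_tail_of_mem h, Multiset.cons_swap]

namespace Der

theorem succ {n : ℕ} {Γ : Multiset LForm} (h : Der n Γ) : Der (n + 1) Γ := by
  induction h with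
  | ax _ p => exact ax _ p
  | one_ _ => exact one_ _
  | bot_ _ ih => exact bot_ ih
  | top_ _ Γ => exact top_ _ Γ
  | tensor_ _ _ ih₁ ih₂ => exact tensor_ ih₁ ih₂
  | parr_ _ ih => exact parr_ ih
  | with_' _ _ ih₁ ih₂ => exact with_' ih₁ ih₂
  | oplus1 _ ih => exact oplus1 ih
  | oplus2 _ ih => exact oplus2 ih
  | promotion Γ _ ih => exact promotion Γ ih
  | dereliction _ ih => exact dereliction ih
  | questW A _ ih => exact questW A ih
  | questC _ ih => exact questC ih

theorem mono {n m : ℕ} {Γ : Multiset LForm} (h : Der n Γ) (hnm : n ≤ m) : Der m Γ :=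
  Nat.le_induction h (fun _ _ => succ) m hnm

open Multiset Classical in
theorem bang_weaken_of_mem {n : ℕ} {Δ : Multiset LForm} {F : LForm} (h : Der n Δ)
    (hF : bang F ∈ Δ) : Der n (F ::ₘ Δ.erase (bang F)) := by
  induction h with
  | ax _ _ | one_ _ => simp at hF
  | @promotion n Γ A hA _ =>
    obtain rfl : A = F := by simpa [eq_comm] using hF
    rw [erase_cons_head]
    exact hA.mono n.le_succ
  | top_ _ Γ =>
    rw [cons_erase_cons_of_mem (by simpa using hF)]
    exact top_ _ _
  | @tensor_ _ Γ₁ Γ₂ _ _ h₁ h₂ ih₁ ih₂ =>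
    have hΓ : bang F ∈ Γ₁ + Γ₂ := by simpa using hF
    rw [cons_erase_cons_of_mem hΓ]
    rcases mem_add.1 hΓ with hΓ₁ | hΓ₂
    · simp only [cons_erase_cons_of_mem, hΓ₁, mem_cons, or_true, true_implies] at ih₁
      rw [erase_add_left_pos _ hΓ₁, ← cons_add]
      exact tensor_ ih₁ h₂
    · simp only [cons_erase_cons_of_mem, hΓ₂, mem_cons, or_true, true_implies] at ih₂
      rw [erase_add_right_pos _ hΓ₂, ← add_cons]
      exact tensor_ h₁ ih₂
  | @bot_ _ Γ _ ih =>
    have hΓ : bang F ∈ Γ := by simpa using hF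
    simp only [cons_erase_cons_of_mem, hΓ, true_implies] at ih ⊢
    exact bot_ ih
  | @parr_ _ Γ _ _ _ ih =>
    have hΓ : bang F ∈ Γ := by simpa using hF
    simp only [cons_erase_cons_of_mem, hΓ, mem_cons, or_true, true_implies] at ih ⊢
    exact parr_ ih
  | @with_' _ Γ _ _ _ _ ih₁ ih₂ =>
    have hΓ : bang F ∈ Γ := by simpa using hF
    simp only [cons_erase_cons_of_mem, hΓ, mem_cons, or_true, true_implies] at ih₁ ih₂ ⊢
    exact with_' ih₁ ih₂
  | @oplus1 _ Γ _ _ _ ih =>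
    have hΓ : bang F ∈ Γ := by simpa using hF
    simp only [cons_erase_cons_of_mem, hΓ, mem_cons, or_true, true_implies] at ih ⊢
    exact oplus1 ih
  | @oplus2 _ Γ _ _ _ ih =>
    have hΓ : bang F ∈ Γ := by simpa using hF
    simp only [cons_erase_cons_of_mem, hΓ, mem_cons, or_true, true_implies] at ih ⊢
    exact oplus2 ih
  | @dereliction _ Γ _ _ ih =>
    have hΓ : bang F ∈ Γ := by simpa using hF
    simp only [cons_erase_cons_of_mem, hΓ, mem_cons, or_true, true_implies] at ih ⊢
    exact dereliction ih
  | @questW _ Γ A _ ih =>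
    have hΓ : bang F ∈ Γ := by simpa using hF
    simp only [cons_erase_cons_of_mem, hΓ, true_implies] at ih ⊢
    exact questW A ih
  | @questC _ Γ _ _ ih =>
    have hΓ : bang F ∈ Γ := by simpa using hF
    simp only [cons_erase_cons_of_mem, hΓ, mem_cons, or_true, true_implies] at ih ⊢
    exact questC ih

end Der

/-- Weakening-of-bang is height-preserving admissible in LL. -/
theorem ll_bang_weakening (n : ℕ) (Γ : Multiset LForm) (F : LForm)
    (h : Der n (LForm.bang F ::ₘ Γ)) : Der n (F ::ₘ Γ) := by
  simpa using h.bang_weaken_of_mem (Multiset.mem_cons_self _ _)
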